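/- Let 1 ≤ i < j ≤ m−1, let n = 2q be even with q ≥ 1, and suppose m ≥ 2j−1. Then α_j ≱_PS α_i; that is, there exists a profile of n preferences over m candidates at which the i-approval rule α_i is manipulable but the j-approval rule α_j is not manipulable. -/

import Mathlib

/-- A preference order on `m` candidates: `σ c` is the position of candidate `c`
(position `0` is the most preferred). `σ c < σ d` means `c` is strictly preferred to `d`. -/
abbrev Pref (m : ℕ) := Fin m ≃ Fin m

/-- A voting rule for `n` voters and `m` candidates. -/
abbrev Rule (m n : ℕ) := (Fin n → Pref m) → Fin m

/-- Total score of candidate `c` under score vector `s` (indexed by position) at profile `P`. -/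
def score {m n : ℕ} (s : Fin m → ℕ) (P : Fin n → Pref m) (c : Fin m) : ℕ :=
  ∑ v, s (P v c)

/-- The scoring rule with score vector `s`: the winner is the candidate that is first in the
lexicographic tie-breaking order (i.e. has the least index) among those of maximal score. -/
def winner {m n : ℕ} [NeZero m] (s : Fin m → ℕ) (P : Fin n → Pref m) : Fin m :=
  (Finset.univ.filter fun c => ∀ d, score s P d ≤ score s P c).min' (by
    obtain ⟨c, -, hc⟩ := Finset.exists_max_image Finset.univ (score s P) Finset.univ_nonempty
    exact ⟨c, Finset.mem_filter.mpr ⟨Finset.mem_univ c, fun d => hc d (Finset.mem_univ d)⟩⟩)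

/-- `k`-approval, `α_k`: one point for each of the top `k` positions. -/
def approval (m n k : ℕ) [NeZero m] : Rule m n :=
  winner (fun r => if (r : ℕ) < k then 1 else 0)

/-- `k`-Borda, `β_k`: `max (0, k - r + 1)` points for (`1`-indexed) position `r`, i.e. `k - r`
(truncated subtraction) points for `0`-indexed position `r`. -/
def kBorda (m n k : ℕ) [NeZero m] : Rule m n :=
  winner (fun r => k - (r : ℕ))

/-- `f` is manipulable at profile `P`: some voter `v` can misreport some preference `Q` and
obtain an outcome strictly preferred (by `v`'s true preferences) to the sincere outcome. -/
def Manipulable {m n : ℕ} (f : Rule m n) (P : Fin n → Pref m) : Prop :=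
  ∃ (v : Fin n) (Q : Pref m), P v (f (Function.update P v Q)) < P v (f P)

/-- `f ≥_PS g` : every profile at which `g` is manipulable is one at which `f` is manipulable. -/
def MoreManip {m n : ℕ} (f g : Rule m n) : Prop :=
  ∀ P : Fin n → Pref m, Manipulable g P → Manipulable f P

/-!
Under `α_i`, half of the voters (type A) approve `1, …, i`; of the other half, `q - 1` voters
(type B') approve `0, j, …, j+i-2` and one voter (type B) approves `j, …, j+i-1`. Then `1, …, i`
and `j, …, j+i-2` tie at `q` points, `0` has `q - 1`, and `1` wins; the B voter ranks `0` at
position `i` and `1` below position `j`, so by reporting B' it lifts `0` to `q` points and `0`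
wins the tie.

Under `α_j`, type A approves `0, …, j-1` and types B, B' approve `0, j, …, 2j-2`: these two sets
meet only in `0` (this needs `2j - 1` candidates), so `0` has `2q` points and every other candidate
at most `q`. A manipulator must prefer the new winner to `0`, hence already approves it, and can
only take one point from `0`.

Only the top-`i` and top-`j` sets of a preference matter here, so each voter type is described by
a tier (`0`: top `i`, `1`: rest of the top `j`, `2`: the others) and realised as the ranking by
tier, ties broken by index.
-/

open Finset

section Winner

variable {m n : ℕ} [NeZero m] (s : Fin m → ℕ) (P : Fin n → Pref m)

lemma score_le_score_winner (d : Fin m) : score s P d ≤ score s P (winner s P) := by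
  have h : winner s P ∈ ({c | ∀ d, score s P d ≤ score s P c} : Finset (Fin m)) := min'_mem _ _
  exact (mem_filter.mp h).2 d

lemma winner_le_of_forall_score_le {c : Fin m} (hc : ∀ d, score s P d ≤ score s P c) :
    winner s P ≤ c :=
  min'_le _ _ (mem_filter.mpr ⟨mem_univ c, hc⟩)

lemma score_lt_score_winner_of_lt {d : Fin m} (hd : d < winner s P) :
    score s P d < score s P (winner s P) := by
  by_contra! h
  exact (winner_le_of_forall_score_le s P fun e => (score_le_score_winner s P e).trans h).not_gt hd

lemma winner_eq_of_forall_score_le {c : Fin m} (hmax : ∀ d, score s P d ≤ score s P c)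
    (hlt : ∀ d < c, score s P d < score s P c) : winner s P = c :=
  (winner_le_of_forall_score_le s P hmax).antisymm <| not_lt.mp fun h =>
    (hlt _ h).not_ge (score_le_score_winner s P c)

lemma winner_eq_zero (hmax : ∀ d, score s P d ≤ score s P 0) : winner s P = 0 :=
  winner_eq_of_forall_score_le s P hmax fun d hd => absurd hd (Fin.not_lt_zero d)

end Winner

lemma score_update_add {m n : ℕ} (s : Fin m → ℕ) (P : Fin n → Pref m) (v : Fin n) (Q : Pref m)
    (d : Fin m) :
    score s (Function.update P v Q) d + s (P v d) = score s P d + s (Q d) := by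
  simp only [score, ← add_sum_erase _ _ (mem_univ v), Function.update_self]
  rw [sum_congr rfl fun w hw => by rw [Function.update_of_ne (ne_of_mem_erase hw)]]
  ring

def approvalVec (m k : ℕ) : Fin m → ℕ := fun r => if (r : ℕ) < k then 1 else 0

lemma approval_eq_winner (m n k : ℕ) [NeZero m] :
    approval m n k = winner (approvalVec m k) :=
  rfl

theorem not_manipulable_approval {m n k : ℕ} [NeZero m] (P : Fin n → Pref m)
    (htop : ∀ v, (P v 0 : ℕ) < k)
    (hlead : ∀ d ≠ 0, score (approvalVec m k) P d < score (approvalVec m k) P 0) :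
    ¬ Manipulable (approval m n k) P := by
  rintro ⟨v, Q, hv⟩
  rw [approval_eq_winner] at hv
  set s := approvalVec m k
  set W := winner s (Function.update P v Q)
  have hP : winner s P = 0 := winner_eq_zero s P fun d => by
    rcases eq_or_ne d 0 with rfl | hd
    exacts [le_rfl, (hlead d hd).le]
  rw [hP] at hv
  have hW : 0 < W := Fin.pos_iff_ne_zero.mpr fun h => (lt_irrefl _) (h ▸ hv)
  -- `v` prefers `W` to `0`, so it already approves `W`; it can only take one point from `0`.
  have hvW : s (P v W) = 1 := if_pos (lt_trans (α := ℕ) hv (htop v))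
  have hQW : s (Q W) ≤ 1 := by simp only [s, approvalVec]; split_ifs <;> omega
  have hv0 : s (P v 0) ≤ 1 := by simp only [s, approvalVec]; split_ifs <;> omega
  have hbeat : score s (Function.update P v Q) 0 < score s (Function.update P v Q) W :=
    score_lt_score_winner_of_lt s _ hW
  have hupdW := score_update_add s P v Q W
  have hupd0 := score_update_add s P v Q 0
  have hleadW := hlead W hW.ne'
  omega

section Rank

variable {α β : Type*} [Fintype α] [LinearOrder β] (κ : α → β)

def rankBy (c : α) : ℕ := #{d | κ d < κ c}

lemma rankBy_lt_rankBy {c d : α} (h : κ d < κ c) : rankBy κ d < rankBy κ c :=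
  card_lt_card <| (ssubset_iff_of_subset fun e he => by
    simp only [mem_filter, mem_univ, true_and] at he ⊢
    exact he.trans h).mpr ⟨d, by simpa using h, by simp⟩

lemma rankBy_injective (hκ : Function.Injective κ) : Function.Injective (rankBy κ) := by
  intro c d h
  by_contra hcd
  rcases (hκ.ne hcd).lt_or_gt with h' | h'
  · exact (rankBy_lt_rankBy κ h').ne h
  · exact (rankBy_lt_rankBy κ h').ne' h

lemma rankBy_lt_card (c : α) : rankBy κ c < Fintype.card α :=
  card_lt_card <| (ssubset_iff_of_subset (subset_univ _)).mpr ⟨c, mem_univ c, by simp⟩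

lemma rankBy_lt_card_iff {L : Finset α} (hL : ∀ d ∈ L, ∀ c ∉ L, κ d < κ c) (c : α) :
    rankBy κ c < #L ↔ c ∈ L := by
  constructor
  · intro hc
    by_contra hcL
    exact hc.not_ge <| card_le_card fun d hd => by simpa using hL d hd c hcL
  · intro hcL
    refine card_lt_card <| (ssubset_iff_of_subset fun d hd => ?_).mpr ⟨c, hcL, by simp⟩
    by_contra hdL
    exact (hL c hcL d hdL).not_gt (by simpa using hd)

end Rank

noncomputable def Pref.ofKey {m : ℕ} {β : Type*} [LinearOrder β] (κ : Fin m → β)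
    (hκ : Function.Injective κ) : Pref m :=
  Equiv.ofBijective (fun c => ⟨rankBy κ c, by simpa using rankBy_lt_card κ c⟩)
    (Finite.injective_iff_bijective.mp fun _ _ h => rankBy_injective κ hκ (congrArg Fin.val h))

noncomputable def tierPref {m : ℕ} (t : Fin m → ℕ) : Pref m :=
  Pref.ofKey (fun c => toLex (t c, c)) fun _ _ h => (Prod.ext_iff.mp (toLex.injective h)).2

lemma tierPref_lt_iff {m : ℕ} (t : Fin m → ℕ) {k K : ℕ} (hK : #{d | t d < k} = K) (c : Fin m) :
    (tierPref t c : ℕ) < K ↔ t c < k := by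
  subst hK
  refine (rankBy_lt_card_iff _ (fun d hd c hc => ?_) c).trans (by simp)
  simp only [mem_filter, mem_univ, true_and, not_lt] at hd hc
  exact Prod.Lex.toLex_lt_toLex.mpr (Or.inl (hd.trans_le hc))

lemma card_filter_fin_eq_card_filter_range {m : ℕ} (p : ℕ → Prop) [DecidablePred p] :
    #{c : Fin m | p c} = #{x ∈ range m | p x} := by
  rw [← Nat.Iio_eq_range, ← Fin.map_valEmbedding_univ, filter_map, card_map]
  rfl

lemma approvalVec_tierPref {m a K : ℕ} (t : Fin m → ℕ) (hK : #{d | t d < a} = K) (c : Fin m) :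
    approvalVec m K (tierPref t c) = if t c < a then 1 else 0 := by
  simp only [approvalVec, tierPref_lt_iff t hK]

section ThreeBlock

variable {m : ℕ} (q : ℕ) (σA σB σB' : Pref m)

def threeBlockProfile : Fin (2 * q) → Pref m :=
  fun v => if (v : ℕ) < q then σA else if (v : ℕ) < 2 * q - 1 then σB' else σB

lemma score_threeBlockProfile (hq : 1 ≤ q) (s : Fin m → ℕ) (c : Fin m) :
    score s (threeBlockProfile q σA σB σB') c = q * s (σA c) + (q - 1) * s (σB' c) + s (σB c) := by
  obtain ⟨r, rfl⟩ : ∃ r, q = r + 1 := ⟨q - 1, by omega⟩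
  set g : ℕ → ℕ :=
    fun x => s ((if x < r + 1 then σA else if x < 2 * (r + 1) - 1 then σB' else σB) c)
  have hA : ∑ x ∈ range (r + 1), g x = (r + 1) * s (σA c) := by
    rw [sum_const_nat (m := s (σA c)) fun x hx => by
      rw [mem_range] at hx; simp only [g]; rw [if_pos hx], card_range]
  have hB' : ∑ x ∈ range r, g (r + 1 + x) = r * s (σB' c) := by
    rw [sum_const_nat (m := s (σB' c)) fun x hx => by
      rw [mem_range] at hx; simp only [g]; rw [if_neg (by omega), if_pos (by omega)], card_range]
  have hB : g (r + 1 + r) = s (σB c) := by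
    simp only [g]; rw [if_neg (by omega), if_neg (by omega)]
  unfold score threeBlockProfile
  rw [Fin.sum_univ_eq_sum_range g, show 2 * (r + 1) = r + 1 + r + 1 by ring, sum_range_succ,
    sum_range_add, hA, hB', hB, Nat.add_sub_cancel]

lemma update_threeBlockProfile_last (hq : 1 ≤ q) :
    Function.update (threeBlockProfile q σA σB σB') ⟨2 * q - 1, by omega⟩ σB' =
      threeBlockProfile q σA σB' σB' := by
  funext v
  rcases eq_or_ne v ⟨2 * q - 1, by omega⟩ with rfl | hv
  · simp only [Function.update_self, threeBlockProfile]
    rw [if_neg (by omega)]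
    split_ifs <;> rfl
  · have : (v : ℕ) ≠ 2 * q - 1 := fun h => hv (Fin.ext h)
    simp only [Function.update_of_ne hv, threeBlockProfile]
    split_ifs <;> first | rfl | omega

lemma forall_threeBlockProfile {p : Pref m → Prop} (hA : p σA) (hB : p σB) (hB' : p σB')
    (v : Fin (2 * q)) : p (threeBlockProfile q σA σB σB' v) := by
  unfold threeBlockProfile
  split_ifs <;> assumption

end ThreeBlock

def tierA (i j c : ℕ) : ℕ := if c = 0 then 1 else if c ≤ i then 0 else if c < j then 1 else 2

def tierB (i j c : ℕ) : ℕ :=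
  if j ≤ c ∧ c < j + i then 0 else if c = 0 ∨ j ≤ c ∧ c < 2 * j - 1 then 1 else 2

def tierB' (i j c : ℕ) : ℕ :=
  if c = 0 ∨ j ≤ c ∧ c < j + i - 1 then 0 else if j ≤ c ∧ c < 2 * j - 1 then 1 else 2

section Tiers

variable {i j : ℕ} {x : ℕ}

lemma tierA_lt_one : tierA i j x < 1 ↔ x ≠ 0 ∧ x ≤ i := by
  unfold tierA; split_ifs <;> omega

lemma tierA_lt_two (hij : i < j) : tierA i j x < 2 ↔ x < j := by
  unfold tierA; split_ifs <;> omega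

lemma tierB_lt_one : tierB i j x < 1 ↔ j ≤ x ∧ x < j + i := by
  unfold tierB; split_ifs <;> omega

lemma tierB_lt_two (hij : i < j) : tierB i j x < 2 ↔ x = 0 ∨ j ≤ x ∧ x < 2 * j - 1 := by
  unfold tierB; split_ifs <;> omega

lemma tierB'_lt_one (hij : i < j) : tierB' i j x < 1 ↔ x = 0 ∨ j ≤ x ∧ x < j + i - 1 := by
  unfold tierB'; split_ifs <;> omega

lemma tierB'_lt_two (hij : i < j) : tierB' i j x < 2 ↔ x = 0 ∨ j ≤ x ∧ x < 2 * j - 1 := by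
  unfold tierB'; split_ifs <;> omega

end Tiers

section Counting

variable {m i j : ℕ}

lemma card_tierA_lt_one (hij : i < j) (hm : 2 * j - 1 ≤ m) :
    #{c : Fin m | tierA i j c < 1} = i := by
  rw [card_filter_fin_eq_card_filter_range (fun x => tierA i j x < 1),
    show {x ∈ range m | tierA i j x < 1} = Icc 1 i by
      ext x; rw [mem_filter, mem_range, mem_Icc, tierA_lt_one]; omega]
  simp

lemma card_tierA_lt_two (hij : i < j) (hm : 2 * j - 1 ≤ m) :
    #{c : Fin m | tierA i j c < 2} = j := by
  rw [card_filter_fin_eq_card_filter_range (fun x => tierA i j x < 2),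
    show {x ∈ range m | tierA i j x < 2} = range j by
      ext x; rw [mem_filter, mem_range, mem_range, tierA_lt_two hij]; omega]
  simp

lemma card_tierB_lt_one (hij : i < j) (hm : 2 * j - 1 ≤ m) :
    #{c : Fin m | tierB i j c < 1} = i := by
  rw [card_filter_fin_eq_card_filter_range (fun x => tierB i j x < 1),
    show {x ∈ range m | tierB i j x < 1} = Ico j (j + i) by
      ext x; rw [mem_filter, mem_range, mem_Ico, tierB_lt_one]; omega]
  simp

lemma card_insert_zero_Ico {a b : ℕ} (ha : 1 ≤ a) :
    #(insert 0 (Ico a b)) = b - a + 1 := by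
  rw [card_insert_of_notMem (by simp; omega), Nat.card_Ico]

lemma card_tierB_lt_two (hij : i < j) (hm : 2 * j - 1 ≤ m) :
    #{c : Fin m | tierB i j c < 2} = j := by
  rw [card_filter_fin_eq_card_filter_range (fun x => tierB i j x < 2),
    show {x ∈ range m | tierB i j x < 2} = insert 0 (Ico j (2 * j - 1)) by
      ext x; rw [mem_filter, mem_range, mem_insert, mem_Ico, tierB_lt_two hij]; omega,
    card_insert_zero_Ico (by omega)]
  omega

lemma card_tierB'_lt_one (hi : 1 ≤ i) (hij : i < j) (hm : 2 * j - 1 ≤ m) :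
    #{c : Fin m | tierB' i j c < 1} = i := by
  rw [card_filter_fin_eq_card_filter_range (fun x => tierB' i j x < 1),
    show {x ∈ range m | tierB' i j x < 1} = insert 0 (Ico j (j + i - 1)) by
      ext x; rw [mem_filter, mem_range, mem_insert, mem_Ico, tierB'_lt_one hij]; omega,
    card_insert_zero_Ico (by omega)]
  omega

lemma card_tierB'_lt_two (hij : i < j) (hm : 2 * j - 1 ≤ m) :
    #{c : Fin m | tierB' i j c < 2} = j := by
  rw [card_filter_fin_eq_card_filter_range (fun x => tierB' i j x < 2),
    show {x ∈ range m | tierB' i j x < 2} = insert 0 (Ico j (2 * j - 1)) by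
      ext x; rw [mem_filter, mem_range, mem_insert, mem_Ico, tierB'_lt_two hij]; omega,
    card_insert_zero_Ico (by omega)]
  omega

end Counting

lemma score_approvalVec_threeBlockProfile_tierPref {m q a K : ℕ} (hq : 1 ≤ q)
    (tA tB tB' : Fin m → ℕ) (hA : #{d | tA d < a} = K) (hB : #{d | tB d < a} = K)
    (hB' : #{d | tB' d < a} = K) (c : Fin m) :
    score (approvalVec m K) (threeBlockProfile q (tierPref tA) (tierPref tB) (tierPref tB')) c =
      q * (if tA c < a then 1 else 0) + (q - 1) * (if tB' c < a then 1 else 0) +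
        (if tB c < a then 1 else 0) := by
  rw [score_threeBlockProfile q _ _ _ hq, approvalVec_tierPref tA hA, approvalVec_tierPref tB hB,
    approvalVec_tierPref tB' hB']

noncomputable def witnessProfile (m q i j : ℕ) : Fin (2 * q) → Pref m :=
  threeBlockProfile q (tierPref fun c => tierA i j c) (tierPref fun c => tierB i j c)
    (tierPref fun c => tierB' i j c)

section WitnessProfile

variable {m q i j : ℕ} [NeZero m]

lemma manipulable_approval_witnessProfile (hi : 1 ≤ i) (hij : i < j) (hq : 1 ≤ q)
    (hm : 2 * j - 1 ≤ m) : Manipulable (approval m (2 * q) i) (witnessProfile m q i j) := by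
  have hm1 : 1 < m := by omega
  have hP (c : Fin m) := score_approvalVec_threeBlockProfile_tierPref hq _ _ _
    (card_tierA_lt_one hij hm) (card_tierB_lt_one hij hm) (card_tierB'_lt_one hi hij hm) c
  have hP' (c : Fin m) := score_approvalVec_threeBlockProfile_tierPref hq _ _ _
    (card_tierA_lt_one hij hm) (card_tierB'_lt_one hi hij hm) (card_tierB'_lt_one hi hij hm) c
  simp only [tierA_lt_one, tierB_lt_one, tierB'_lt_one hij] at hP hP'
  have hwin : winner (approvalVec m i) (witnessProfile m q i j) = ⟨1, hm1⟩ := by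
    have hP1 : score (approvalVec m i) (witnessProfile m q i j) ⟨1, hm1⟩ = q := by
      rw [witnessProfile, hP]
      simp only [one_ne_zero, false_or]
      split_ifs <;> omega
    refine winner_eq_of_forall_score_le _ _ (fun d => ?_) (fun d hd => ?_)
    · rw [hP1, witnessProfile, hP]; split_ifs <;> omega
    · have hd0 : (d : ℕ) = 0 := by have : (d : ℕ) < 1 := hd; omega
      rw [hP1, witnessProfile, hP, hd0]; split_ifs <;> omega
  have hwin' : winner (approvalVec m i) (threeBlockProfile q (tierPref fun c => tierA i j c)
      (tierPref fun c => tierB' i j c) (tierPref fun c => tierB' i j c)) = 0 := by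
    refine winner_eq_zero _ _ fun d => ?_
    rw [hP', hP', Fin.val_zero]; split_ifs <;> omega
  refine ⟨⟨2 * q - 1, by omega⟩, tierPref fun c => tierB' i j c, ?_⟩
  rw [approval_eq_winner, witnessProfile, update_threeBlockProfile_last _ _ _ _ hq, hwin',
    ← witnessProfile, hwin]
  have hlast : witnessProfile m q i j ⟨2 * q - 1, by omega⟩ = tierPref fun c => tierB i j c := by
    simp only [witnessProfile, threeBlockProfile]
    rw [if_neg (by omega), if_neg (by omega)]
  have htop := tierPref_lt_iff _ (card_tierB_lt_two hij hm)
  rw [hlast]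
  have h0 : (tierPref (fun c => tierB i j c) 0 : ℕ) < j :=
    (htop 0).mpr (by simp [tierB_lt_two hij])
  have h1 : ¬ (tierPref (fun c => tierB i j c) ⟨1, hm1⟩ : ℕ) < j :=
    (htop _).not.mpr (show ¬ tierB i j 1 < 2 by rw [tierB_lt_two hij]; omega)
  exact Fin.lt_def.mpr (by omega)

lemma not_manipulable_approval_witnessProfile (hij : i < j) (hq : 1 ≤ q) (hm : 2 * j - 1 ≤ m) :
    ¬ Manipulable (approval m (2 * q) j) (witnessProfile m q i j) := by
  have hP (c : Fin m) := score_approvalVec_threeBlockProfile_tierPref hq _ _ _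
    (card_tierA_lt_two hij hm) (card_tierB_lt_two hij hm) (card_tierB'_lt_two hij hm) c
  simp only [tierA_lt_two hij, tierB_lt_two hij, tierB'_lt_two hij] at hP
  refine not_manipulable_approval _
    (forall_threeBlockProfile (p := fun σ => (σ 0 : ℕ) < j) _ _ _ _ ?_ ?_ ?_) fun d hd => ?_
  · exact (tierPref_lt_iff _ (card_tierA_lt_two hij hm) 0).mpr (by simp [tierA_lt_two hij]; omega)
  · exact (tierPref_lt_iff _ (card_tierB_lt_two hij hm) 0).mpr (by simp [tierB_lt_two hij])
  · exact (tierPref_lt_iff _ (card_tierB'_lt_two hij hm) 0).mpr (by simp [tierB'_lt_two hij])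
  · have : (d : ℕ) ≠ 0 := Fin.val_ne_iff.mpr hd
    rw [witnessProfile, hP, hP, Fin.val_zero]
    split_ifs <;> omega

end WitnessProfile

theorem stmt_1_general (m n q i j : ℕ) [NeZero m] (hi : 1 ≤ i) (hij : i < j)
    (hq : 1 ≤ q) (hn : n = 2 * q) (hm : 2 * j - 1 ≤ m) :
    ∃ P : Fin n → Pref m,
      Manipulable (approval m n i) P ∧ ¬ Manipulable (approval m n j) P := by
  subst hn
  exact ⟨witnessProfile m q i j, manipulable_approval_witnessProfile hi hij hq hm,
    not_manipulable_approval_witnessProfile hij hq hm⟩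

/-- For `1 ≤ i < j ≤ m-1`, `n = 2q` even with `q ≥ 1`, and `m ≥ 2j-1`: `α_j ≱_PS α_i`. -/
theorem stmt_1 (m n q i j : ℕ) [NeZero m] (hi : 1 ≤ i) (hij : i < j) (hj : j ≤ m - 1)
    (hq : 1 ≤ q) (hn : n = 2 * q) (hm : 2 * j - 1 ≤ m) :
    ∃ P : Fin n → Pref m,
      Manipulable (approval m n i) P ∧ ¬ Manipulable (approval m n j) P :=
  stmt_1_general m n q i j hi hij hq hn hm
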